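/- Assume ϖ_i is quasi-minuscule, and let w ∈ W_J (with J = I ∖ {i}), x ∈ W, and d ∈ Q^{∨,+}. If x ∈ W_J, ⟨ϖ_i, d⟩ = 0, and qwt(w ⇒ x) ≤ d, then R(w,x,d) consists exactly of the trivial directed path of length 0 at w; otherwise R(w,x,d) = ∅. -/

import Mathlib

set_option autoImplicit false
set_option maxHeartbeats 1000000

open scoped Classical

noncomputable section

/-- Axiomatized combinatorial data attached to a finite-dimensional complex simple Lie
algebra `𝔤`: a Cartan subalgebra `𝔱` and its dual `𝔱*` (as ℚ-vector spaces), the canonical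
pairing, the positive roots `Δ⁺`, simple roots `α_j` (indexed by the finite set `I`),
coroots, fundamental weights `ϖ_j`, the Weyl group `W` with its action on `𝔱*`,
reflections `s_α`, the length function `ℓ`, and the highest root `θ`. -/
structure QBGSetup (I : Type) [Fintype I] [DecidableEq I] where
  /-- the dual `𝔱*` of the Cartan subalgebra (rational form) -/
  V : Type
  [acgV : AddCommGroup V]
  [modV : Module ℚ V]
  [deceqV : DecidableEq V]
  /-- the Cartan subalgebra `𝔱` (rational form) -/
  Vc : Type
  [acgVc : AddCommGroup Vc]
  [modVc : Module ℚ Vc]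
  [deceqVc : DecidableEq Vc]
  /-- the canonical pairing `⟨·,·⟩ : 𝔱* × 𝔱 → ℚ` -/
  pairing : V →ₗ[ℚ] Vc →ₗ[ℚ] ℚ
  /-- the finite set `Δ⁺` of positive roots -/
  pos : Finset V
  /-- the simple roots `α_j`, `j ∈ I` -/
  simpleRoot : I → V
  simpleRoot_mem : ∀ j, simpleRoot j ∈ pos
  simpleRoot_inj : Function.Injective simpleRoot
  pos_span : ∀ α ∈ pos, ∃ c : I → ℕ, α = ∑ j, (c j : ℚ) • simpleRoot j
  /-- the coroot `α^∨` of a root `α` -/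
  coroot : V → Vc
  coroot_neg : ∀ α : V, coroot (-α) = -coroot α
  pairing_self : ∀ α ∈ pos, pairing α (coroot α) = 2
  pairing_int : ∀ α ∈ pos, ∀ β ∈ pos, ∃ k : ℤ, pairing α (coroot β) = (k : ℚ)
  /-- the fundamental weights `ϖ_j`, `j ∈ I` -/
  fwt : I → V
  pairing_fwt : ∀ i j : I, pairing (fwt i) (coroot (simpleRoot j)) = if i = j then 1 else 0
  /-- the Weyl group `W` -/
  W : Type
  [groupW : Group W]
  /-- the action of `W` on `𝔱*` -/
  act : W →* (V ≃ₗ[ℚ] V)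
  /-- the reflection `s_α` in a root `α` -/
  sα : V → W
  act_sα : ∀ α ∈ pos, ∀ v : V, act (sα α) v = v - pairing v (coroot α) • α
  sα_neg : ∀ α : V, sα (-α) = sα α
  sα_conj : ∀ (w : W) (α : V), sα (act w α) = w * sα α * w⁻¹
  root_perm : ∀ α ∈ pos, ∀ w : W, act w α ∈ pos ∨ -(act w α) ∈ pos
  gen : Subgroup.closure (Set.range fun j : I => sα (simpleRoot j)) = ⊤
  /-- the length function `ℓ : W → ℕ` -/
  len : W → ℕ
  len_eq : ∀ w : W, len w = (pos.filter fun α => act w α ∉ pos).card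
  /-- the highest root `θ` of `Δ` -/
  θ : V
  θ_mem : θ ∈ pos
  θ_highest : ∀ α ∈ pos, ∃ c : I → ℕ, θ - α = ∑ j, (c j : ℚ) • simpleRoot j

namespace QBGSetup

attribute [instance] acgV modV deceqV acgVc modVc deceqVc groupW

variable {I : Type} [Fintype I] [DecidableEq I]

/-- `ρ = (1/2) ∑_{α ∈ Δ⁺} α` -/
def rho (S : QBGSetup I) : S.V := (2 : ℚ)⁻¹ • ∑ α ∈ S.pos, α

/-- the simple reflection `s_j`, `j ∈ I` -/
def s (S : QBGSetup I) (j : I) : S.W := S.sα (S.simpleRoot j)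

/-- affine simple roots, indexed by `I_af = I ⊔ {0}` (`none` plays the role of `0`):
`some j ↦ α_j` and `none ↦ α_0 = -θ` -/
def aroot (S : QBGSetup I) : Option I → S.V
  | some j => S.simpleRoot j
  | none => -S.θ

/-- `s_j` for `j ∈ I_af`, with `s_0 = s_θ` -/
def as (S : QBGSetup I) : Option I → S.W
  | some j => S.s j
  | none => S.sα S.θ

/-- the Kronecker delta `δ_{j,0}` for `j ∈ I_af` -/
def δ0 : Option I → ℕ
  | some _ => 0
  | none => 1

/-- `Q⁺ = ∑_j ℤ_{≥0} α_j` -/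
def QPos (S : QBGSetup I) : Set S.V :=
  {q | ∃ c : I → ℕ, q = ∑ j, (c j : ℚ) • S.simpleRoot j}

/-- `Q^{∨,+} = ∑_j ℤ_{≥0} α_j^∨` -/
def QvPos (S : QBGSetup I) : Set S.Vc :=
  {q | ∃ c : I → ℕ, q = ∑ j, (c j : ℚ) • S.coroot (S.simpleRoot j)}

/-- the coroot lattice `Q^∨ = ⊕_j ℤ α_j^∨` -/
def QvLat (S : QBGSetup I) : Set S.Vc :=
  {q | ∃ c : I → ℤ, q = ∑ j, (c j : ℚ) • S.coroot (S.simpleRoot j)}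

/-- the weight lattice `Λ = ⊕_j ℤ ϖ_j` -/
def wtLat (S : QBGSetup I) : Set S.V :=
  {v | ∃ c : I → ℤ, v = ∑ j, (c j : ℚ) • S.fwt j}

/-- `ζ ≤ ξ` iff `ξ - ζ ∈ Q^{∨,+}` -/
def vle (S : QBGSetup I) (ζ ξ : S.Vc) : Prop := ξ - ζ ∈ S.QvPos

/-- `Q_J^{∨,+} = ∑_{j ∈ J} ℤ_{≥0} α_j^∨` -/
def QvPosJ (S : QBGSetup I) (J : Set I) : Set S.Vc :=
  {q | ∃ c : I → ℕ, (∀ j ∉ J, c j = 0) ∧ q = ∑ j, (c j : ℚ) • S.coroot (S.simpleRoot j)}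

/-- the parabolic subgroup `W_J = ⟨s_j : j ∈ J⟩` -/
def WJ (S : QBGSetup I) (J : Set I) : Subgroup S.W := Subgroup.closure (S.s '' J)

/-- `Δ_J⁺ = Δ⁺ ∩ ∑_{j ∈ J} ℤ α_j` -/
def posJ (S : QBGSetup I) (J : Set I) : Set S.V :=
  {α | α ∈ S.pos ∧ ∃ c : I → ℤ, (∀ j ∉ J, c j = 0) ∧ α = ∑ j, (c j : ℚ) • S.simpleRoot j}

/-- a Bruhat edge `x →^α y` of the quantum Bruhat graph `QBG(W)` -/
def IsBruhatEdge (S : QBGSetup I) (x : S.W) (α : S.V) (y : S.W) : Prop :=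
  α ∈ S.pos ∧ y = x * S.sα α ∧ S.len y = S.len x + 1

/-- a quantum edge `x →^α y` of the quantum Bruhat graph `QBG(W)`:
`ℓ(y) = ℓ(x) + 1 - 2⟨ρ, α^∨⟩` -/
def IsQuantumEdge (S : QBGSetup I) (x : S.W) (α : S.V) (y : S.W) : Prop :=
  α ∈ S.pos ∧ y = x * S.sα α ∧
    (S.len y : ℚ) = (S.len x : ℚ) + 1 - 2 * S.pairing S.rho (S.coroot α)

/-- an edge `x →^α y` of the quantum Bruhat graph `QBG(W)` -/
def IsEdge (S : QBGSetup I) (x : S.W) (α : S.V) (y : S.W) : Prop :=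
  S.IsBruhatEdge x α y ∨ S.IsQuantumEdge x α y

/-- `S.IsPathFrom w steps` : `steps` is the list of (label, endpoint) pairs of the
successive edges of a directed path in `QBG(W)` starting at `w` -/
def IsPathFrom (S : QBGSetup I) : S.W → List (S.V × S.W) → Prop
  | _, [] => True
  | w, st :: rest => S.IsEdge w st.1 st.2 ∧ IsPathFrom S st.2 rest

/-- a directed path in the quantum Bruhat graph `QBG(W)` -/
structure Path (S : QBGSetup I) where
  start : S.W
  steps : List (S.V × S.W)
  valid : S.IsPathFrom start steps

/-- the final vertex of the step list `l` of a path starting at `w` -/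
def endOf (S : QBGSetup I) (w : S.W) (l : List (S.V × S.W)) : S.W :=
  (l.getLast?).elim w Prod.snd

/-- the sum of the coroots of the labels of the quantum edges along a path -/
def qwtFrom (S : QBGSetup I) : S.W → List (S.V × S.W) → S.Vc
  | _, [] => 0
  | w, st :: rest =>
      (if S.IsQuantumEdge w st.1 st.2 then S.coroot st.1 else 0) + qwtFrom S st.2 rest

namespace Path

/-- the final vertex `ed(p)` of a directed path -/
def ed {S : QBGSetup I} (p : S.Path) : S.W := S.endOf p.start p.steps

/-- the length `ℓ(p)` of a directed path -/
def len {S : QBGSetup I} (p : S.Path) : ℕ := p.steps.length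

/-- the list of labels `β_1, …, β_r` of a directed path -/
def labels {S : QBGSetup I} (p : S.Path) : List S.V := p.steps.map Prod.fst

/-- `qwt(p)`, the sum of `β_t^∨` over the quantum edges of `p` -/
def qwt {S : QBGSetup I} (p : S.Path) : S.Vc := S.qwtFrom p.start p.steps

end Path

/-- the trivial (length 0) directed path at `w` -/
def trivialPath (S : QBGSetup I) (w : S.W) : S.Path := ⟨w, [], trivial⟩

/-- `ℓ(w ⇒ v)`, the length of a shortest directed path from `w` to `v` in `QBG(W)` -/
def dist (S : QBGSetup I) (w v : S.W) : ℕ :=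
  sInf {n : ℕ | ∃ p : S.Path, p.start = w ∧ p.ed = v ∧ p.len = n}

/-- `p` is a shortest directed path from `w` to `v` in `QBG(W)` -/
def IsShortestPath (S : QBGSetup I) (p : S.Path) (w v : S.W) : Prop :=
  p.start = w ∧ p.ed = v ∧ p.len = S.dist w v

/-- `qwt(w ⇒ v)`, the `qwt` of a (choice of) shortest directed path from `w` to `v`
(independent of the choice, by [LNSSS1, Prop. 8.1]) -/
def qwtTo (S : QBGSetup I) (w v : S.W) : S.Vc :=
  if h : ∃ p : S.Path, S.IsShortestPath p w v then h.choose.qwt else 0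

/-- the `w`-tilted Bruhat order: `v₁ ≤_w v₂` iff `ℓ(w ⇒ v₂) = ℓ(w ⇒ v₁) + ℓ(v₁ ⇒ v₂)` -/
def tle (S : QBGSetup I) (w v₁ v₂ : S.W) : Prop :=
  S.dist w v₂ = S.dist w v₁ + S.dist v₁ v₂

/-- `v = min_{≤_w}(x W_J)`: `v` is the minimal element of the coset `x W_J` with respect to
the `w`-tilted Bruhat order -/
def IsCosetMin (S : QBGSetup I) (w : S.W) (J : Set I) (x v : S.W) : Prop :=
  x⁻¹ * v ∈ S.WJ J ∧ ∀ u : S.W, x⁻¹ * u ∈ S.WJ J → S.tle w v u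

/-- a reflection (convex) order `◁` on `Δ⁺` -/
structure ReflectionOrder (S : QBGSetup I) where
  lt : S.V → S.V → Prop
  irrefl : ∀ α ∈ S.pos, ¬lt α α
  trans : ∀ α ∈ S.pos, ∀ β ∈ S.pos, ∀ γ ∈ S.pos, lt α β → lt β γ → lt α γ
  total : ∀ α ∈ S.pos, ∀ β ∈ S.pos, α ≠ β → lt α β ∨ lt β α
  convex : ∀ α ∈ S.pos, ∀ β ∈ S.pos, α + β ∈ S.pos →
    (lt α (α + β) ∧ lt (α + β) β) ∨ (lt β (α + β) ∧ lt (α + β) α)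

/-- the condition that `γ ◁ β` for all `γ ∈ Δ_J⁺` and `β ∈ Δ⁺ ∖ Δ_J⁺` -/
def ReflectionOrder.Compatible {S : QBGSetup I} (ro : S.ReflectionOrder) (J : Set I) : Prop :=
  ∀ γ ∈ S.posJ J, ∀ β ∈ S.pos, β ∉ S.posJ J → ro.lt γ β

/-- `J = I ∖ {i}` -/
def Jc (i : I) : Set I := {j | j ≠ i}

/-- `ϖ_i` is quasi-minuscule: `⟨ϖ_i, β^∨⟩ ∈ {0,1,2}` for all `β ∈ Δ⁺` -/
def QuasiMinuscule (S : QBGSetup I) (i : I) : Prop :=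
  ∀ β ∈ S.pos, S.pairing (S.fwt i) (S.coroot β) = 0 ∨
    S.pairing (S.fwt i) (S.coroot β) = 1 ∨ S.pairing (S.fwt i) (S.coroot β) = 2

/-- `ϖ_i` is minuscule: `⟨ϖ_i, β^∨⟩ ∈ {0,1}` for all `β ∈ Δ⁺` -/
def Minuscule (S : QBGSetup I) (i : I) : Prop :=
  ∀ β ∈ S.pos, S.pairing (S.fwt i) (S.coroot β) = 0 ∨ S.pairing (S.fwt i) (S.coroot β) = 1

/-- the set `R(w,x,d)` of label-increasing directed paths `p` starting at `w`, all of whose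
labels `β` satisfy `⟨ϖ_i, β^∨⟩ = 2`, with `ed(p) ∈ x W_J`,
`qwt(ed(p) ⇒ x) ≤ d - qwt(p)` and `⟨ϖ_i, d - qwt(p)⟩ = 0` (where `J = I ∖ {i}`) -/
def RSet (S : QBGSetup I) (ro : S.ReflectionOrder) (i : I) (w x : S.W) (d : S.Vc) :
    Set S.Path :=
  {p | p.start = w ∧ List.Chain' ro.lt p.labels ∧
    (∀ β ∈ p.labels, S.pairing (S.fwt i) (S.coroot β) = 2) ∧
    x⁻¹ * p.ed ∈ S.WJ (Jc i) ∧
    S.vle (S.qwtTo p.ed x) (d - p.qwt) ∧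
    S.pairing (S.fwt i) (d - p.qwt) = 0}

end QBGSetup
namespace QBGSetup

variable {I : Type} [Fintype I] [DecidableEq I] (S : QBGSetup I)

/-- applying a product of Weyl group elements -/
lemma act_mul_apply (u v : S.W) (x : S.V) : S.act (u * v) x = S.act u (S.act v x) := by
  rw [map_mul]; rfl

lemma act_one_apply (x : S.V) : S.act 1 x = x := by rw [map_one]; rfl

lemma act_inv_apply (u : S.W) (x : S.V) : S.act u⁻¹ (S.act u x) = x := by
  rw [← act_mul_apply, inv_mul_cancel, act_one_apply]

lemma act_apply_inv (u : S.W) (x : S.V) : S.act u (S.act u⁻¹ x) = x := by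
  rw [← act_mul_apply, mul_inv_cancel, act_one_apply]

lemma pos_ne_zero {α : S.V} (hα : α ∈ S.pos) : α ≠ 0 := by
  intro h
  have h2 := S.pairing_self α hα
  rw [h] at h2
  simp at h2

lemma smul_cancel {a b : ℚ} {x : S.V} (hx : x ≠ 0) (h : a • x = b • x) : a = b := by
  by_contra hab
  have h1 : (a - b) • x = 0 := by rw [sub_smul, h, sub_self]
  have h2 : x = ((a - b)⁻¹ * (a - b)) • x := by
    rw [inv_mul_cancel₀ (sub_ne_zero.mpr hab), one_smul]
  rw [mul_smul, h1, smul_zero] at h2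
  exact hx h2

lemma smul_cancel₀ {a : ℚ} {x : S.V} (hx : x ≠ 0) (h : a • x = 0) : a = 0 := by
  apply S.smul_cancel hx
  rw [h, zero_smul]

/-- the reflection `s_β` acts as an involution on `V` -/
lemma sα_invol {β : S.V} (hβ : β ∈ S.pos) (v : S.V) :
    S.act (S.sα β) (S.act (S.sα β) v) = v := by
  rw [S.act_sα β hβ v, S.act_sα β hβ _]
  simp only [map_sub, map_smul, LinearMap.sub_apply, LinearMap.smul_apply, smul_eq_mul,
    S.pairing_self β hβ]
  have h : S.pairing v (S.coroot β) - S.pairing v (S.coroot β) * 2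
      = -(S.pairing v (S.coroot β)) := by ring
  rw [h, neg_smul, sub_neg_eq_add, sub_add_cancel]

lemma act_sα_inv_apply {β : S.V} (hβ : β ∈ S.pos) (v : S.V) :
    S.act (S.sα β)⁻¹ v = S.act (S.sα β) v := by
  conv_lhs => rw [← S.sα_invol hβ v]
  rw [act_inv_apply]

/-- equivariance of coroots: positive case -/
lemma equivar_pos {α : S.V} (hα : α ∈ S.pos) (w : S.W) (h : S.act w α ∈ S.pos) (v : S.V) :
    S.pairing v (S.coroot (S.act w α)) = S.pairing (S.act w⁻¹ v) (S.coroot α) := by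
  have hconj := S.sα_conj w α
  have h1 : S.act (S.sα (S.act w α)) v
      = v - (S.pairing v (S.coroot (S.act w α))) • (S.act w α) := S.act_sα _ h v
  have h2 : S.act (w * S.sα α * w⁻¹) v
      = v - (S.pairing (S.act w⁻¹ v) (S.coroot α)) • (S.act w α) := by
    rw [act_mul_apply, act_mul_apply, S.act_sα α hα, map_sub, map_smul, act_apply_inv]
  rw [hconj, h2] at h1
  have h3 : (S.pairing (S.act w⁻¹ v) (S.coroot α)) • (S.act w α)
      = (S.pairing v (S.coroot (S.act w α))) • (S.act w α) := by
    rw [sub_right_inj.mp h1]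
  exact (S.smul_cancel (S.pos_ne_zero h) h3).symm

/-- equivariance of coroots: negative case -/
lemma equivar_neg {α : S.V} (hα : α ∈ S.pos) (w : S.W) (h : -(S.act w α) ∈ S.pos) (v : S.V) :
    S.pairing v (S.coroot (-(S.act w α))) = -(S.pairing (S.act w⁻¹ v) (S.coroot α)) := by
  rw [S.coroot_neg, map_neg, neg_inj.symm.mp rfl, neg_inj]
  have hconj := S.sα_conj w α
  have h1 : S.act (S.sα (-(S.act w α))) v
      = v - (S.pairing v (S.coroot (-(S.act w α)))) • (-(S.act w α)) := S.act_sα _ h v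
  rw [S.sα_neg, S.coroot_neg, map_neg, hconj] at h1
  have h2 : S.act (w * S.sα α * w⁻¹) v
      = v - (S.pairing (S.act w⁻¹ v) (S.coroot α)) • (S.act w α) := by
    rw [act_mul_apply, act_mul_apply, S.act_sα α hα, map_sub, map_smul, act_apply_inv]
  rw [h2] at h1
  simp only [LinearMap.neg_apply, neg_smul_neg] at h1
  have h3 := sub_right_inj.mp h1
  have hx : S.act w α ≠ 0 := by
    intro hh
    exact S.pos_ne_zero h (by rw [hh, neg_zero])
  exact (S.smul_cancel hx h3).symm

/-- `c γ = ⟨ϖ_i, γ^∨⟩` -/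
def cp (i : I) (γ : S.V) : ℚ := S.pairing (S.fwt i) (S.coroot γ)

variable (i : I)

lemma cp_neg (γ : S.V) : S.cp i (-γ) = -(S.cp i γ) := by
  unfold cp; rw [S.coroot_neg, map_neg]

lemma cp_simple (j : I) : S.cp i (S.simpleRoot j) = if i = j then 1 else 0 :=
  S.pairing_fwt i j

lemma cp_cases (hqm : S.QuasiMinuscule i) {γ : S.V} (hγ : γ ∈ S.pos) :
    S.cp i γ = 0 ∨ S.cp i γ = 1 ∨ S.cp i γ = 2 := hqm γ hγ

lemma cp_nonneg (hqm : S.QuasiMinuscule i) {γ : S.V} (hγ : γ ∈ S.pos) : 0 ≤ S.cp i γ := by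
  rcases hqm γ hγ with h | h | h <;> rw [show S.pairing (S.fwt i) (S.coroot γ) = S.cp i γ from rfl] at h <;>
    rw [h] <;> norm_num

lemma cp_le_two (hqm : S.QuasiMinuscule i) {γ : S.V} (hγ : γ ∈ S.pos) : S.cp i γ ≤ 2 := by
  rcases hqm γ hγ with h | h | h <;> rw [show S.pairing (S.fwt i) (S.coroot γ) = S.cp i γ from rfl] at h <;>
    rw [h] <;> norm_num

/-- a positive root with positive `c`-value has no negative in `Δ⁺` -/
lemma neg_notin_pos (hqm : S.QuasiMinuscule i) {γ : S.V} (hγ : γ ∈ S.pos)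
    (hc : 0 < S.cp i γ) : -γ ∉ S.pos := by
  intro h
  have := S.cp_nonneg i hqm h
  rw [S.cp_neg] at this
  linarith

/-- image of `ϖ_i` under a reflection -/
lemma sα_fwt {η : S.V} (hη : η ∈ S.pos) :
    S.act (S.sα η) (S.fwt i) = S.fwt i - (S.cp i η) • η := S.act_sα η hη _

/-- c-value of a reflected root, positive case -/
lemma cp_sα_pos {η γ : S.V} (hη : η ∈ S.pos) (hγ : γ ∈ S.pos)
    (h : S.act (S.sα η) γ ∈ S.pos) :
    S.cp i (S.act (S.sα η) γ) = S.cp i γ - (S.cp i η) * (S.pairing η (S.coroot γ)) := by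
  show S.pairing _ (S.coroot _) = _
  rw [S.equivar_pos hγ (S.sα η) h (S.fwt i), S.act_sα_inv_apply hη, S.sα_fwt i hη]
  simp only [map_sub, map_smul, LinearMap.sub_apply, LinearMap.smul_apply, smul_eq_mul]
  rfl

/-- c-value of a reflected root, negative case -/
lemma cp_sα_neg {η γ : S.V} (hη : η ∈ S.pos) (hγ : γ ∈ S.pos)
    (h : -(S.act (S.sα η) γ) ∈ S.pos) :
    S.cp i (-(S.act (S.sα η) γ)) = -(S.cp i γ - (S.cp i η) * (S.pairing η (S.coroot γ))) := by
  show S.pairing _ (S.coroot _) = _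
  rw [S.equivar_neg hγ (S.sα η) h (S.fwt i), S.act_sα_inv_apply hη, S.sα_fwt i hη]
  simp only [map_sub, map_smul, LinearMap.sub_apply, LinearMap.smul_apply, smul_eq_mul]
  rfl

/-- orthogonality is symmetric -/
lemma zero_sym {x y : S.V} (hx : x ∈ S.pos) (hy : y ∈ S.pos)
    (h : S.pairing y (S.coroot x) = 0) : S.pairing x (S.coroot y) = 0 := by
  have hfix : S.act (S.sα x) y = y := by
    rw [S.act_sα x hx, h, zero_smul, sub_zero]
  have hconj := S.sα_conj (S.sα x) y
  rw [hfix] at hconj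
  -- hconj : S.sα y = S.sα x * S.sα y * (S.sα x)⁻¹
  have hcomm : S.sα y * S.sα x = S.sα x * S.sα y := by
    conv_lhs => rw [hconj]
    group
  have happ : S.act (S.sα y * S.sα x) x = S.act (S.sα x * S.sα y) x := by rw [hcomm]
  rw [act_mul_apply, act_mul_apply] at happ
  set k := S.pairing x (S.coroot y) with hk
  have hx1 : S.act (S.sα x) x = -x := by
    rw [S.act_sα x hx, S.pairing_self x hx]
    rw [show (2 : ℚ) • x = x + x by rw [two_smul]]
    abel
  have hy1 : S.act (S.sα y) x = x - k • y := by rw [S.act_sα y hy]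
  rw [hx1, map_neg, hy1, map_sub, map_smul, hfix, hx1] at happ
  -- happ : -(x - k•y) = -x - k•y
  rw [neg_sub] at happ
  have h2 : (k + k) • y = 0 := by
    rw [add_smul]
    calc k • y + k • y = (k • y - x) + (x + k • y) := by abel
      _ = (-x - k • y) + (x + k • y) := by rw [happ]
      _ = 0 := by abel
  have hk0 := S.smul_cancel₀ (S.pos_ne_zero hy) h2
  linarith

/-- window lemma: a root with `c ≥ 1` pairs nonnegatively with the coroot of a root with `c = 2` -/
lemma w1 (hqm : S.QuasiMinuscule i) {b γ : S.V} (hb : b ∈ S.pos) (hcb : S.cp i b = 2)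
    (hγ : γ ∈ S.pos) (hcγ : 1 ≤ S.cp i γ) : 0 ≤ S.pairing γ (S.coroot b) := by
  by_contra hneg
  push_neg at hneg
  rcases S.root_perm b hb (S.sα γ) with h | h
  · have hv := S.cp_sα_pos i hγ hb h
    rw [hcb] at hv
    have h2 := S.cp_le_two i hqm h
    nlinarith [hv, h2, hcγ, hneg]
  · have hv := S.cp_sα_neg i hγ hb h
    rw [hcb] at hv
    have h2 := S.cp_nonneg i hqm h
    nlinarith [hv, h2, hcγ, hneg]

lemma mem_Jc {m : I} (h : m ≠ i) : m ∈ Jc i := h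

lemma s_mem_WJ {m : I} (h : m ≠ i) : S.s m ∈ S.WJ (Jc i) :=
  Subgroup.subset_closure ⟨m, h, rfl⟩

/-- elements of `W_J` fix `ϖ_i` and permute the positive roots with positive `c`-value,
preserving the `c`-value -/
lemma wj_props (hqm : S.QuasiMinuscule i) :
    ∀ w ∈ S.WJ (Jc i), S.act w (S.fwt i) = S.fwt i ∧
      ∀ γ ∈ S.pos, 1 ≤ S.cp i γ → S.act w γ ∈ S.pos ∧ S.cp i (S.act w γ) = S.cp i γ := by
  intro w hw
  unfold WJ at hw
  induction hw using Subgroup.closure_induction with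
  | mem x hx =>
    obtain ⟨m, hm, rfl⟩ := hx
    have hmi : m ≠ i := hm
    have hcm : S.cp i (S.simpleRoot m) = 0 := by
      rw [S.cp_simple, if_neg (Ne.symm hmi)]
    have hsm : S.s m = S.sα (S.simpleRoot m) := rfl
    constructor
    · rw [hsm, S.sα_fwt i (S.simpleRoot_mem m), hcm, zero_smul, sub_zero]
    · intro γ hγ hc
      rcases S.root_perm γ hγ (S.s m) with h | h
      · refine ⟨h, ?_⟩
        rw [hsm] at h ⊢
        rw [S.cp_sα_pos i (S.simpleRoot_mem m) hγ h, hcm, zero_mul, sub_zero]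
      · exfalso
        rw [hsm] at h
        have hv := S.cp_sα_neg i (S.simpleRoot_mem m) hγ h
        rw [hcm, zero_mul, sub_zero] at hv
        have := S.cp_nonneg i hqm h
        rw [hv] at this
        linarith
  | one =>
    constructor
    · rw [act_one_apply]
    · intro γ hγ hc
      rw [act_one_apply]
      exact ⟨hγ, rfl⟩
  | mul x y hx hy px py =>
    constructor
    · rw [act_mul_apply, py.1, px.1]
    · intro γ hγ hc
      obtain ⟨h1, h2⟩ := py.2 γ hγ hc
      obtain ⟨h3, h4⟩ := px.2 _ h1 (by rw [h2]; exact hc)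
      rw [act_mul_apply]
      exact ⟨h3, by rw [h4, h2]⟩
  | inv x hx px =>
    constructor
    · conv_lhs => rw [← px.1, act_inv_apply]
    · intro γ hγ hc
      classical
      set q := S.cp i γ with hq
      set T := S.pos.filter (fun δ => S.cp i δ = q) with hT
      have hmem : ∀ δ ∈ T, S.act x δ ∈ T := by
        intro δ hδ
        rw [hT, Finset.mem_filter] at hδ ⊢
        obtain ⟨hδ1, hδ2⟩ := hδ
        obtain ⟨h1, h2⟩ := px.2 δ hδ1 (by rw [hδ2]; exact hc)
        exact ⟨h1, by rw [h2, hδ2]⟩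
      have hsurj := Finset.surj_on_of_inj_on_of_card_le (fun δ _ => S.act x δ)
        (fun δ hδ => hmem δ hδ)
        (fun δ₁ δ₂ _ _ hEq => (S.act x).injective hEq)
        le_rfl γ (by rw [hT, Finset.mem_filter]; exact ⟨hγ, rfl⟩)
      obtain ⟨δ, hδ, hfd⟩ := hsurj
      have hδ' := hδ
      rw [hT, Finset.mem_filter] at hδ'
      have hxi : S.act x⁻¹ γ = δ := by rw [hfd, act_inv_apply]
      rw [hxi]
      exact ⟨hδ'.1, hδ'.2⟩

/-- the core lemma: if `c(β) = 2`, some positive root with `c = 1` pairs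
nontrivially with `β^∨` -/
lemma core_lemma (hqm : S.QuasiMinuscule i) {β : S.V} (hβ : β ∈ S.pos)
    (hcβ : S.cp i β = 2) :
    ∃ γ ∈ S.pos, S.cp i γ = 1 ∧ S.pairing γ (S.coroot β) ≠ 0 := by
  by_contra hcon
  push_neg at hcon
  have hαi : S.simpleRoot i ∈ S.pos := S.simpleRoot_mem i
  have hcαi : S.cp i (S.simpleRoot i) = 1 := by rw [S.cp_simple, if_pos rfl]
  have key : ∀ u ∈ S.WJ (Jc i), S.pairing (S.act u β) (S.coroot (S.simpleRoot i)) = 0 := by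
    intro u hu
    have hu' : u⁻¹ ∈ S.WJ (Jc i) := inv_mem hu
    obtain ⟨h1, h2⟩ := (S.wj_props i hqm u⁻¹ hu').2 (S.simpleRoot i) hαi (by rw [hcαi])
    have h3 := hcon _ h1 (by rw [h2, hcαi])
    have h4 := S.zero_sym hβ h1 h3
    have h5 := S.equivar_pos hαi u⁻¹ h1 β
    rw [inv_inv] at h5
    rw [← h5]
    exact h4
  classical
  set O := S.pos.filter (fun γ => ∃ u ∈ S.WJ (Jc i), γ = S.act u β) with hO
  have hβO : β ∈ O := by
    rw [hO, Finset.mem_filter]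
    exact ⟨hβ, 1, one_mem _, (S.act_one_apply β).symm⟩
  have hOc : ∀ γ ∈ O, γ ∈ S.pos ∧ S.cp i γ = 2 := by
    intro γ hγ
    rw [hO, Finset.mem_filter] at hγ
    obtain ⟨hp, u, hu, rfl⟩ := hγ
    refine ⟨hp, ?_⟩
    have := (S.wj_props i hqm u hu).2 β hβ (by rw [hcβ]; norm_num)
    rw [this.2, hcβ]
  have hOα : ∀ γ ∈ O, S.pairing γ (S.coroot (S.simpleRoot i)) = 0 := by
    intro γ hγ
    rw [hO, Finset.mem_filter] at hγ
    obtain ⟨hp, u, hu, rfl⟩ := hγ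
    exact key u hu
  set T := ∑ γ ∈ O, γ with hT
  have hpT : ∀ q : S.Vc, S.pairing T q = ∑ γ ∈ O, S.pairing γ q := by
    intro q
    rw [hT, map_sum]
    exact LinearMap.sum_apply _ _ _
  have hTj : ∀ j : I, S.pairing T (S.coroot (S.simpleRoot j)) = 0 := by
    intro j
    by_cases hji : j = i
    · subst hji
      rw [hpT]
      exact Finset.sum_eq_zero (fun γ hγ => hOα γ hγ)
    · have hperm : ∀ γ ∈ O, S.act (S.s j) γ ∈ O := by
        intro γ hγ
        rw [hO, Finset.mem_filter] at hγ ⊢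
        obtain ⟨hp, u, hu, rfl⟩ := hγ
        have hju : S.s j * u ∈ S.WJ (Jc i) := mul_mem (S.s_mem_WJ i hji) hu
        refine ⟨?_, S.s j * u, hju, (S.act_mul_apply _ _ _).symm⟩
        have := (S.wj_props i hqm _ hju).2 β hβ (by rw [hcβ]; norm_num)
        rw [← S.act_mul_apply]
        exact this.1
      have hsj : S.s j = S.sα (S.simpleRoot j) := rfl
      have hinvol : ∀ γ, S.act (S.s j) (S.act (S.s j) γ) = γ := by
        intro γ
        rw [hsj]
        exact S.sα_invol (S.simpleRoot_mem j) γ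
      have hinvT : S.act (S.s j) T = T := by
        rw [hT, map_sum]
        refine Finset.sum_bij' (fun γ _ => S.act (S.s j) γ) (fun γ _ => S.act (S.s j) γ)
          hperm hperm ?_ ?_ ?_
        · intro γ hγ; exact hinvol γ
        · intro γ hγ; exact hinvol γ
        · intro γ hγ; rfl
      have hact := S.act_sα (S.simpleRoot j) (S.simpleRoot_mem j) T
      rw [← hsj, hinvT] at hact
      have : S.pairing T (S.coroot (S.simpleRoot j)) • S.simpleRoot j = 0 := by
        have := sub_eq_self.mp hact.symm
        exact this
      exact S.smul_cancel₀ (S.pos_ne_zero (S.simpleRoot_mem j)) this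
  have hWT : ∀ v : S.W, S.act v T = T := by
    intro v
    have hv : v ∈ Subgroup.closure (Set.range fun j : I => S.sα (S.simpleRoot j)) := by
      rw [S.gen]; trivial
    induction hv using Subgroup.closure_induction with
    | mem x hx =>
      obtain ⟨j, rfl⟩ := hx
      rw [S.act_sα _ (S.simpleRoot_mem j), hTj j, zero_smul, sub_zero]
    | one => rw [act_one_apply]
    | mul x y _ _ px py => rw [act_mul_apply, py, px]
    | inv x _ px => conv_lhs => rw [← px, act_inv_apply]
  have hfin := hWT (S.sα β)
  rw [S.act_sα β hβ T] at hfin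
  have h0 : S.pairing T (S.coroot β) = 0 := by
    have h1 : S.pairing T (S.coroot β) • β = 0 := sub_eq_self.mp hfin
    exact S.smul_cancel₀ (S.pos_ne_zero hβ) h1
  have hge : 2 ≤ S.pairing T (S.coroot β) := by
    rw [hpT]
    have hterm : ∀ γ ∈ O, 0 ≤ S.pairing γ (S.coroot β) := by
      intro γ hγ
      exact S.w1 i hqm hβ hcβ (hOc γ hγ).1 (by rw [(hOc γ hγ).2]; norm_num)
    calc (2 : ℚ) = S.pairing β (S.coroot β) := (S.pairing_self β hβ).symm
      _ ≤ ∑ γ ∈ O, S.pairing γ (S.coroot β) := Finset.single_le_sum hterm hβO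
  linarith

lemma pairing_sα_coroot {β γ : S.V} (hβ : β ∈ S.pos) :
    S.pairing (S.act (S.sα β) γ) (S.coroot β) = -(S.pairing γ (S.coroot β)) := by
  rw [S.act_sα β hβ γ, map_sub, map_smul, LinearMap.sub_apply, LinearMap.smul_apply,
    smul_eq_mul, S.pairing_self β hβ]
  ring

lemma sα_self {β : S.V} (hβ : β ∈ S.pos) : S.act (S.sα β) β = -β := by
  rw [S.act_sα β hβ β, S.pairing_self β hβ, two_smul]
  abel

/-- every positive root pairs nonnegatively with the coroot of a `c = 2` root;
(needed for terms in the `ρ`-sum over the inversion set of `s_β`) -/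
lemma nonneg_B_term (hqm : S.QuasiMinuscule i) {β γ : S.V} (hβ : β ∈ S.pos)
    (hcβ : S.cp i β = 2) (hγ : γ ∈ S.pos) (hB : S.act (S.sα β) γ ∉ S.pos) :
    0 ≤ S.pairing γ (S.coroot β) := by
  rcases S.cp_cases i hqm hγ with h0 | h1 | h2
  · -- c(γ) = 0 : use the partner root ψγ = -σ_β γ
    rcases S.root_perm γ hγ (S.sα β) with h | h
    · exact absurd h hB
    by_cases ht : S.pairing β (S.coroot γ) = 0
    · rw [S.zero_sym hγ hβ ht]
    · have hψc := S.cp_sα_neg i hβ hγ h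
      rw [h0, hcβ, zero_sub, neg_neg] at hψc
      -- hψc : cp (ψγ) = 2 * pairing β (coroot γ)
      have hψ1 : 1 ≤ S.cp i (-(S.act (S.sα β) γ)) := by
        rcases S.cp_cases i hqm h with hh | hh | hh
        · exfalso; rw [hh] at hψc; exact ht (by linarith)
        · rw [hh]
        · rw [hh]; norm_num
      have hw := S.w1 i hqm hβ hcβ h hψ1
      rw [map_neg, LinearMap.neg_apply, S.pairing_sα_coroot hβ, neg_neg] at hw
      exact hw
  · exact S.w1 i hqm hβ hcβ hγ (by rw [h1])
  · exact S.w1 i hqm hβ hcβ hγ (by rw [h2]; norm_num)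

/-- `⟨ρ, β^∨⟩ ≥ 1` whenever `c(β) = 2` -/
lemma rho_bound (hqm : S.QuasiMinuscule i) {β : S.V} (hβ : β ∈ S.pos)
    (hcβ : S.cp i β = 2) : 1 ≤ S.pairing S.rho (S.coroot β) := by
  classical
  have hrho : S.pairing S.rho (S.coroot β)
      = (2 : ℚ)⁻¹ * ∑ γ ∈ S.pos, S.pairing γ (S.coroot β) := by
    rw [rho, map_smul, LinearMap.smul_apply, smul_eq_mul, map_sum, LinearMap.sum_apply]
  have hsplit := Finset.sum_filter_add_sum_filter_not S.pos
    (fun γ => S.act (S.sα β) γ ∈ S.pos) (fun γ => S.pairing γ (S.coroot β))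
  have hC : ∑ γ ∈ S.pos.filter (fun γ => S.act (S.sα β) γ ∈ S.pos),
      S.pairing γ (S.coroot β) = 0 := by
    refine Finset.sum_involution (fun γ _ => S.act (S.sα β) γ) ?_ ?_ ?_ ?_
    · intro γ hγ
      rw [S.pairing_sα_coroot hβ]
      ring
    · intro γ hγ hf hEq
      apply hf
      have : S.pairing (S.act (S.sα β) γ) (S.coroot β) = S.pairing γ (S.coroot β) :=
        congrArg (fun z => S.pairing z (S.coroot β)) hEq
      rw [S.pairing_sα_coroot hβ] at this
      linarith
    · intro γ hγ
      rw [Finset.mem_filter] at hγ ⊢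
      exact ⟨hγ.2, by rw [S.sα_invol hβ]; exact hγ.1⟩
    · intro γ hγ
      exact S.sα_invol hβ γ
  have hβB : β ∈ S.pos.filter (fun γ => ¬(S.act (S.sα β) γ ∈ S.pos)) := by
    rw [Finset.mem_filter]
    refine ⟨hβ, ?_⟩
    rw [S.sα_self hβ]
    exact S.neg_notin_pos i hqm hβ (by rw [hcβ]; norm_num)
  have hB : 2 ≤ ∑ γ ∈ S.pos.filter (fun γ => ¬(S.act (S.sα β) γ ∈ S.pos)),
      S.pairing γ (S.coroot β) := by
    have hterm : ∀ γ ∈ S.pos.filter (fun γ => ¬(S.act (S.sα β) γ ∈ S.pos)),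
        0 ≤ S.pairing γ (S.coroot β) := by
      intro γ hγ
      rw [Finset.mem_filter] at hγ
      exact S.nonneg_B_term i hqm hβ hcβ hγ.1 hγ.2
    calc (2 : ℚ) = S.pairing β (S.coroot β) := (S.pairing_self β hβ).symm
      _ ≤ _ := Finset.single_le_sum hterm hβB
  rw [hrho, ← hsplit, hC, zero_add]
  linarith

/-- if `w ∈ W_J` and `c(β) = 2`, then `ℓ(w s_β) ≥ ℓ(w) + 2` -/
lemma len_key (hqm : S.QuasiMinuscule i) {w : S.W} (hw : w ∈ S.WJ (Jc i)) {β : S.V}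
    (hβ : β ∈ S.pos) (hcβ : S.cp i β = 2) :
    S.len w + 2 ≤ S.len (w * S.sα β) := by
  classical
  obtain ⟨γs, hγs, hcγs, hkγs⟩ := S.core_lemma i hqm hβ hcβ
  have hwp := S.wj_props i hqm w hw
  -- notation
  set σ : S.V → S.V := fun γ => S.act (S.sα β) γ with hσ
  have hσσ : ∀ γ, σ (σ γ) = γ := fun γ => S.sα_invol hβ γ
  -- the two length formulas
  have hlen1 : S.len (w * S.sα β)
      = (S.pos.filter (fun γ => S.act w (σ γ) ∉ S.pos)).card := by
    rw [S.len_eq]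
    congr 1
    apply Finset.filter_congr
    intro γ _
    rw [act_mul_apply]
  have hlen0 : S.len w = (S.pos.filter (fun γ => S.act w γ ∉ S.pos)).card := S.len_eq w
  -- split each by whether σ γ ∈ pos
  have hsplit1 := Finset.card_filter_add_card_filter_not
    (s := S.pos.filter (fun γ => S.act w (σ γ) ∉ S.pos)) (fun γ => σ γ ∈ S.pos)
  have hsplit0 := Finset.card_filter_add_card_filter_not
    (s := S.pos.filter (fun γ => S.act w γ ∉ S.pos)) (fun γ => σ γ ∈ S.pos)
  set A₁ := (S.pos.filter (fun γ => S.act w (σ γ) ∉ S.pos)).filter (fun γ => σ γ ∈ S.pos)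
    with hA₁
  set B₁ := (S.pos.filter (fun γ => S.act w (σ γ) ∉ S.pos)).filter (fun γ => ¬(σ γ ∈ S.pos))
    with hB₁
  set A₀ := (S.pos.filter (fun γ => S.act w γ ∉ S.pos)).filter (fun γ => σ γ ∈ S.pos)
    with hA₀
  set B₀ := (S.pos.filter (fun γ => S.act w γ ∉ S.pos)).filter (fun γ => ¬(σ γ ∈ S.pos))
    with hB₀
  -- the bijection between A₁ and A₀ given by σ
  have hAA : A₁.card = A₀.card := by
    refine Finset.card_bij' (fun γ _ => σ γ) (fun γ _ => σ γ) ?_ ?_ ?_ ?_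
    · intro γ hγ
      rw [hA₁, Finset.mem_filter, Finset.mem_filter] at hγ
      rw [hA₀, Finset.mem_filter, Finset.mem_filter]
      exact ⟨⟨hγ.2, hγ.1.2⟩, by rw [hσσ]; exact hγ.1.1⟩
    · intro γ hγ
      rw [hA₀, Finset.mem_filter, Finset.mem_filter] at hγ
      rw [hA₁, Finset.mem_filter, Finset.mem_filter]
      refine ⟨⟨hγ.2, ?_⟩, by rw [hσσ]; exact hγ.1.1⟩
      rw [hσσ]
      exact hγ.1.2
    · intro γ _; exact hσσ γ
    · intro γ _; exact hσσ γ
  -- the c = 0 part of the inversion set of s_β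
  set Bc0 := S.pos.filter (fun γ => ¬(σ γ ∈ S.pos) ∧ S.cp i γ = 0) with hBc0
  -- B₀ ⊆ Bc0
  have hB0sub : B₀ ⊆ Bc0 := by
    intro γ hγ
    rw [hB₀, Finset.mem_filter, Finset.mem_filter] at hγ
    rw [hBc0, Finset.mem_filter]
    refine ⟨hγ.1.1, hγ.2, ?_⟩
    rcases S.cp_cases i hqm hγ.1.1 with h | h | h
    · exact h
    · exact absurd (hwp.2 γ hγ.1.1 (by rw [h])).1 hγ.1.2
    · exact absurd (hwp.2 γ hγ.1.1 (by rw [h]; norm_num)).1 hγ.1.2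
  -- members of B₁ : each element of Bc0, γs, and β
  have hmemB₁ : ∀ γ ∈ S.pos, ¬(σ γ ∈ S.pos) → 1 ≤ S.cp i (-(σ γ)) → γ ∈ B₁ := by
    intro γ hγp hγσ hψ
    have hψpos : -(σ γ) ∈ S.pos := by
      rcases S.root_perm γ hγp (S.sα β) with h | h
      · exact absurd h hγσ
      · exact h
    obtain ⟨hwψ, hwψc⟩ := hwp.2 _ hψpos hψ
    rw [hB₁, Finset.mem_filter, Finset.mem_filter]
    refine ⟨⟨hγp, ?_⟩, hγσ⟩
    have : S.act w (σ γ) = -(S.act w (-(σ γ))) := by rw [map_neg, neg_neg]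
    rw [this]
    apply S.neg_notin_pos i hqm hwψ
    rw [hwψc]
    linarith
  -- β ∈ B₁
  have hβB₁ : β ∈ B₁ := by
    have hσβ : ¬(σ β ∈ S.pos) := by
      rw [hσ]
      simp only []
      rw [S.sα_self hβ]
      exact S.neg_notin_pos i hqm hβ (by rw [hcβ]; norm_num)
    apply hmemB₁ β hβ hσβ
    have : -(σ β) = β := by
      rw [hσ]; simp only []; rw [S.sα_self hβ, neg_neg]
    rw [this, hcβ]
    norm_num
  -- γs ∈ B₁
  obtain ⟨tk, htk⟩ := S.pairing_int β hβ γs hγs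
  have hγsB₁ : γs ∈ B₁ := by
    have hσγs : ¬(σ γs ∈ S.pos) := by
      intro h
      have hv := S.cp_sα_pos i hβ hγs h
      rw [hcγs, hcβ, htk] at hv
      rcases S.cp_cases i hqm h with hh | hh | hh <;> rw [hv] at hh
      · -- 1 - 2k = 0
        have : (2 : ℚ) * tk = 1 := by linarith
        have : (2 * tk : ℤ) = 1 := by exact_mod_cast this
        omega
      · -- 1 - 2k = 1 gives k = 0, contradicting hkγs via zero_sym
        have htk0 : (tk : ℚ) = 0 := by linarith
        apply hkγs
        apply S.zero_sym hγs hβ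
        rw [htk, htk0]
      · have : (2 : ℚ) * tk = -1 := by linarith
        have : (2 * tk : ℤ) = -1 := by exact_mod_cast this
        omega
    apply hmemB₁ γs hγs hσγs
    have hψpos : -(σ γs) ∈ S.pos := by
      rcases S.root_perm γs hγs (S.sα β) with h | h
      · exact absurd h hσγs
      · exact h
    have hv := S.cp_sα_neg i hβ hγs hψpos
    rw [hcγs, hcβ, htk] at hv
    rcases S.cp_cases i hqm hψpos with hh | hh | hh
    · exfalso
      rw [hh] at hv
      have : (2 : ℚ) * tk = 1 := by linarith
      have : (2 * tk : ℤ) = 1 := by exact_mod_cast this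
      omega
    · rw [hh]
    · rw [hh]; norm_num
  -- Bc0 ⊆ B₁
  have hBc0sub : Bc0 ⊆ B₁ := by
    intro γ hγ
    rw [hBc0, Finset.mem_filter] at hγ
    obtain ⟨hγp, hγσ, hγc⟩ := hγ
    apply hmemB₁ γ hγp hγσ
    have hψpos : -(σ γ) ∈ S.pos := by
      rcases S.root_perm γ hγp (S.sα β) with h | h
      · exact absurd h hγσ
      · exact h
    have hv := S.cp_sα_neg i hβ hγp hψpos
    rw [hγc, hcβ, zero_sub, neg_neg] at hv
    have ht0 : S.pairing β (S.coroot γ) ≠ 0 := by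
      intro h0
      apply hγσ
      have hk0 := S.zero_sym hγp hβ h0
      rw [hσ]
      simp only []
      rw [S.act_sα β hβ γ, hk0, zero_smul, sub_zero]
      exact hγp
    rcases S.cp_cases i hqm hψpos with hh | hh | hh
    · exfalso; rw [hh] at hv; exact ht0 (by linarith)
    · rw [hh]
    · rw [hh]; norm_num
  -- counting
  have hins : insert β (insert γs Bc0) ⊆ B₁ := by
    intro γ hγ
    rcases Finset.mem_insert.mp hγ with rfl | hγ
    · exact hβB₁
    rcases Finset.mem_insert.mp hγ with rfl | hγ
    · exact hγsB₁
    · exact hBc0sub hγ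
  have hβnot : β ∉ insert γs Bc0 := by
    intro h
    rcases Finset.mem_insert.mp h with rfl | h
    · rw [hcβ] at hcγs; norm_num at hcγs
    · rw [hBc0, Finset.mem_filter] at h
      rw [hcβ] at h
      norm_num at h
  have hγsnot : γs ∉ Bc0 := by
    intro h
    rw [hBc0, Finset.mem_filter] at h
    rw [hcγs] at h
    norm_num at h
  have hcard : Bc0.card + 2 ≤ B₁.card := by
    have h1 := Finset.card_le_card hins
    rw [Finset.card_insert_of_notMem hβnot, Finset.card_insert_of_notMem hγsnot] at h1
    omega
  have hcard0 : B₀.card ≤ Bc0.card := Finset.card_le_card hB0sub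
  -- put everything together
  rw [hlen1, ← hsplit1, hlen0, ← hsplit0, hAA]
  omega

/-- no edge of `QBG(W)` starts at an element of `W_J` and has a label `β` with
`⟨ϖ_i, β^∨⟩ = 2` -/
lemma no_edge (hqm : S.QuasiMinuscule i) {w : S.W} (hw : w ∈ S.WJ (Jc i)) {β : S.V}
    (hc : S.pairing (S.fwt i) (S.coroot β) = 2) (u : S.W) : ¬ S.IsEdge w β u := by
  intro hedge
  have hc' : ∀ hβ : β ∈ S.pos, S.cp i β = 2 := fun _ => hc
  rcases hedge with ⟨hβ, hu, hlen⟩ | ⟨hβ, hu, hlen⟩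
  · have hk := S.len_key i hqm hw hβ (hc' hβ)
    rw [hu] at hlen
    omega
  · have hρ := S.rho_bound i hqm hβ (hc' hβ)
    have hk := S.len_key i hqm hw hβ (hc' hβ)
    rw [hu] at hlen
    have hkq : (S.len w : ℚ) + 2 ≤ (S.len (w * S.sα β) : ℚ) := by exact_mod_cast hk
    linarith

lemma path_eq_trivial {w : S.W} (p : S.Path) (h1 : p.start = w) (h2 : p.steps = []) :
    p = S.trivialPath w := by
  obtain ⟨ps, pst, pv⟩ := p
  simp only at h1 h2
  subst h1
  subst h2
  rfl

lemma trivial_ed (w : S.W) : (S.trivialPath w).ed = w := rfl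

lemma trivial_qwt (w : S.W) : (S.trivialPath w).qwt = 0 := rfl

lemma trivial_labels (w : S.W) : (S.trivialPath w).labels = [] := rfl

/-- any path in `R(w,x,d)` with `w ∈ W_J` is trivial -/
lemma rset_steps_nil (hqm : S.QuasiMinuscule i) {w x : S.W} (hw : w ∈ S.WJ (Jc i))
    {d : S.Vc} {ro : S.ReflectionOrder} {p : S.Path} (hp : p ∈ S.RSet ro i w x d) :
    p.steps = [] := by
  obtain ⟨hstart, hchain, hlab, hcoset, hvle, hpair⟩ := hp
  cases hst : p.steps with
  | nil => rfl
  | cons st rest =>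
    exfalso
    have hval := p.valid
    rw [hstart, hst] at hval
    have hedge : S.IsEdge w st.1 st.2 := hval.1
    have hmem : st.1 ∈ p.labels := by
      show st.1 ∈ p.steps.map Prod.fst
      rw [hst]
      exact List.mem_map_of_mem (f := Prod.fst) (List.mem_cons_self (a := st) (l := rest))
    exact S.no_edge i hqm hw (hlab st.1 hmem) st.2 hedge

/-- membership of the trivial path in `R(w,x,d)` is equivalent to the three conditions -/
lemma trivial_mem_iff (ro : S.ReflectionOrder) {w x : S.W} (hw : w ∈ S.WJ (Jc i))
    {d : S.Vc} :
    S.trivialPath w ∈ S.RSet ro i w x d ↔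
      (x ∈ S.WJ (Jc i) ∧ S.pairing (S.fwt i) d = 0 ∧ S.vle (S.qwtTo w x) d) := by
  constructor
  · rintro ⟨-, -, -, hcoset, hvle, hpair⟩
    rw [S.trivial_ed] at hcoset hvle
    rw [S.trivial_qwt, sub_zero] at hvle hpair
    refine ⟨?_, hpair, hvle⟩
    have hx : x = w * (x⁻¹ * w)⁻¹ := by group
    rw [hx]
    exact mul_mem hw (inv_mem hcoset)
  · rintro ⟨hx, hd0, hv⟩
    refine ⟨rfl, ?_, ?_, ?_, ?_, ?_⟩
    · rw [S.trivial_labels]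
      exact List.isChain_nil
    · intro β hβ
      rw [S.trivial_labels] at hβ
      exact absurd hβ (List.not_mem_nil (a := β))
    · rw [S.trivial_ed]
      exact mul_mem (inv_mem hx) hw
    · rw [S.trivial_ed, S.trivial_qwt, sub_zero]
      exact hv
    · rw [S.trivial_qwt, sub_zero]
      exact hd0

end QBGSetup

/-- Quasi-minuscule case, `w ∈ W_J`: if `x ∈ W_J`, `⟨ϖ_i, d⟩ = 0` and `qwt(w ⇒ x) ≤ d`,
then `R(w,x,d)` consists exactly of the trivial path at `w`; otherwise `R(w,x,d) = ∅`. -/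
theorem statement11 {I : Type} [Fintype I] [DecidableEq I] (S : QBGSetup I)
    (i : I) (hqm : S.QuasiMinuscule i)
    (ro : S.ReflectionOrder) (hro : ro.Compatible (QBGSetup.Jc i))
    (w x : S.W) (hw : w ∈ S.WJ (QBGSetup.Jc i)) (d : S.Vc) (hd : d ∈ S.QvPos) :
    ((x ∈ S.WJ (QBGSetup.Jc i) ∧ S.pairing (S.fwt i) d = 0 ∧ S.vle (S.qwtTo w x) d) →
      S.RSet ro i w x d = {S.trivialPath w}) ∧
    (¬(x ∈ S.WJ (QBGSetup.Jc i) ∧ S.pairing (S.fwt i) d = 0 ∧ S.vle (S.qwtTo w x) d) →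
      S.RSet ro i w x d = ∅) := by
  have hkey : ∀ p ∈ S.RSet ro i w x d, p = S.trivialPath w := by
    intro p hp
    exact S.path_eq_trivial p hp.1 (S.rset_steps_nil i hqm hw hp)
  constructor
  · intro hyp
    ext p
    simp only [Set.mem_singleton_iff]
    constructor
    · intro hp
      exact hkey p hp
    · rintro rfl
      exact (S.trivial_mem_iff i ro hw).mpr hyp
  · intro hnot
    ext p
    simp only [Set.mem_empty_iff_false, iff_false]
    intro hp
    apply hnot
    have hpt := hkey p hp
    rw [hpt] at hp
    exact (S.trivial_mem_iff i ro hw).mp hp
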